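/- arXiv:1004.4721 — 2 statements merged into one kernel-verified Lean document; each statement's English description precedes it below -/
import Mathlib

section
/- Let {R,F} be a compatible pair of R-matrices on V⊗V, V = ℂ^N, let A be an associative unital ℂ-algebra, and let M ∈ Mat_N(A) satisfy the quantum matrix algebra relation R₁ M_{1̄} M_{2̄} = M_{1̄} M_{2̄} R₁, where M_{1̄} = M₁ and M_{k+1‾} = F_k M_{k̄} F_k⁻¹. Then for every k ≥ 1 the same relation holds for consecutive copies: R_k M_{k̄} M_{k+1‾} = M_{k̄} M_{k+1‾} R_k in Mat_{N^{k+1}}(A). -/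
open Matrix BigOperators

/-- `X₁ = X ⊗ id` acting on the factors 1,2 of `(ℂ^N)^{⊗3}`. -/
noncomputable def up12 {N : ℕ} (X : Matrix (Fin N × Fin N) (Fin N × Fin N) ℂ) :
    Matrix (Fin N × Fin N × Fin N) (Fin N × Fin N × Fin N) ℂ :=
  Matrix.of fun p q => X (p.1, p.2.1) (q.1, q.2.1) * (if p.2.2 = q.2.2 then 1 else 0)

/-- `X₂ = id ⊗ X` acting on the factors 2,3 of `(ℂ^N)^{⊗3}`. -/
noncomputable def up23 {N : ℕ} (X : Matrix (Fin N × Fin N) (Fin N × Fin N) ℂ) :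
    Matrix (Fin N × Fin N × Fin N) (Fin N × Fin N × Fin N) ℂ :=
  Matrix.of fun p q => (if p.1 = q.1 then 1 else 0) * X (p.2.1, p.2.2) (q.2.1, q.2.2)

/-- `X₁ = X ⊗ I_N` on two tensor factors, for a matrix over an algebra `A`. -/
def lift1 {N : ℕ} {A : Type} [Ring A] (X : Matrix (Fin N) (Fin N) A) :
    Matrix (Fin N × Fin N) (Fin N × Fin N) A :=
  Matrix.of fun p q => X p.1 q.1 * (if p.2 = q.2 then 1 else 0)

/-- A matrix `X ∈ Mat_N(A)` placed in the (0-indexed) tensor factor `p`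
of `V^{⊗k}`, acting as the identity elsewhere. -/
def liftV {N : ℕ} {A : Type} [Ring A] (k : ℕ) (X : Matrix (Fin N) (Fin N) A)
    (p : ℕ) : Matrix (Fin k → Fin N) (Fin k → Fin N) A :=
  Matrix.of fun v w =>
    if h : p < k then
      X (v ⟨p, h⟩) (w ⟨p, h⟩) *
        (if ∀ j : Fin k, (j : ℕ) ≠ p → v j = w j then 1 else 0)
    else (if v = w then 1 else 0)

/-- A matrix `X ∈ Mat_{N²}(A)` placed in the (0-indexed) tensor factors
`p, p+1` of `V^{⊗k}`; this is the operator `X_{p+1}` in 1-indexed notation. -/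
def lift2 {N : ℕ} {A : Type} [Ring A] (k : ℕ)
    (X : Matrix (Fin N × Fin N) (Fin N × Fin N) A) (p : ℕ) :
    Matrix (Fin k → Fin N) (Fin k → Fin N) A :=
  Matrix.of fun v w =>
    if h : p + 1 < k then
      X (v ⟨p, Nat.lt_of_succ_lt h⟩, v ⟨p + 1, h⟩)
          (w ⟨p, Nat.lt_of_succ_lt h⟩, w ⟨p + 1, h⟩) *
        (if ∀ j : Fin k, (j : ℕ) ≠ p → (j : ℕ) ≠ p + 1 → v j = w j then 1 else 0)
    else (if v = w then 1 else 0)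

/-- The `F`-copies of `M` in `Mat_{N^k}(A)`:
`M_{1̄} = M₁` and `M_{n+2‾} = F_{n+1} M_{n+1‾} F_{n+1}⁻¹` (0-indexed:
`copies k FA FinvA M n` is the copy `M_{n+1‾}`). -/
def copies {N : ℕ} {A : Type} [Ring A] (k : ℕ)
    (FA FinvA : Matrix (Fin N × Fin N) (Fin N × Fin N) A)
    (M : Matrix (Fin N) (Fin N) A) :
    ℕ → Matrix (Fin k → Fin N) (Fin k → Fin N) A
  | 0 => liftV k M 0
  | n + 1 => lift2 k FA n * copies k FA FinvA M n * lift2 k FinvA n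

/-!
Write `F_p`, `R_p` for `F`, `R` acting on the tensor factors `p, p+1`, and `M_p` for the
`p`-th copy, so that `M_{p+1} = F_p M_p F_p⁻¹`. The copy `M_p` lives on the first `p+1`
factors, hence commutes with `F_{p+1}`; together with the braid relation for `F` this gives
`M_{p+1} M_{p+2} = (F_p F_{p+1}) (M_p M_{p+1}) (F_p F_{p+1})⁻¹`, while the second
compatibility relation reads `R_{p+1} = (F_p F_{p+1}) R_p (F_p F_{p+1})⁻¹`. Conjugating the
relation at `p` by `F_p F_{p+1}` thus yields it at `p+1`; at `p = 0` it is the defining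
relation of `M`.
-/

open Function

section AgreeOff

variable {K I J N : Type*}

theorem extend_eq_self_of_agreeOff {s : I → K} (hs : Injective s) {v u : K → N}
    (h : ∀ j, (∀ i, s i ≠ j) → v j = u j) : extend s (u ∘ s) v = u := by
  funext j
  by_cases hj : ∃ i, s i = j
  · obtain ⟨i, rfl⟩ := hj
    exact hs.extend_apply _ _ i
  · rw [extend_apply' _ _ _ hj]
    exact h j (not_exists.mp hj)

theorem agreeOff_extend_iff {s : I → K} (x : I → N) (v w : K → N) :
    (∀ j, (∀ i, s i ≠ j) → extend s x v j = w j) ↔ ∀ j, (∀ i, s i ≠ j) → v j = w j := by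
  refine forall_congr' fun j => imp_congr_right fun hj => ?_
  rw [extend_apply' _ _ _ (not_exists.mpr hj)]

theorem agreeOff_extend_iff_of_disjoint {s : I → K} {t : J → K} (hs : Injective s)
    (hst : ∀ i i', s i ≠ t i') (x : I → N) (v w : K → N) :
    (∀ j, (∀ i, t i ≠ j) → extend s x v j = w j) ↔
      x = w ∘ s ∧ ∀ j, (∀ i, s i ≠ j) → (∀ i, t i ≠ j) → v j = w j := by
  constructor
  · intro h
    refine ⟨funext fun i => ?_, fun j hs' ht' => ?_⟩
    · simpa [hs.extend_apply] using h (s i) fun i' => (hst i i').symm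
    · simpa [extend_apply' _ _ _ (not_exists.mpr hs')] using h j ht'
  · rintro ⟨rfl, h⟩ j ht'
    by_cases hj : ∃ i, s i = j
    · obtain ⟨i, rfl⟩ := hj
      exact hs.extend_apply _ _ i
    · rw [extend_apply' _ _ _ hj]
      exact h j (not_exists.mp hj) ht'

end AgreeOff

section EmbedAlong

variable {K I J N A : Type*} [Fintype K] [DecidableEq K] [Fintype I] [Fintype J]
  [DecidableEq N] [Ring A]

/-- `K → N` indexes the standard basis of `(A^N)^{⊗K}`; `embedAlong s X` is `X` acting on the
tensor factors `s i` (in the order given by `s`) and the identity on all other factors. -/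
def embedAlong (s : I → K) (X : Matrix (I → N) (I → N) A) : Matrix (K → N) (K → N) A :=
  of fun v w => X (v ∘ s) (w ∘ s) * if ∀ j, (∀ i, s i ≠ j) → v j = w j then 1 else 0

theorem embedAlong_mul_apply [DecidableEq I] [Fintype N] {s : I → K} (hs : Injective s)
    (X : Matrix (I → N) (I → N) A) (Z : Matrix (K → N) (K → N) A) (v w : K → N) :
    (embedAlong s X * Z) v w = ∑ x, X (v ∘ s) x * Z (extend s x v) w := by
  simp only [mul_apply, embedAlong, of_apply, mul_ite, mul_one, mul_zero, ite_mul, zero_mul]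
  rw [← Finset.sum_filter]
  refine Finset.sum_nbij' (· ∘ s) (extend s · v) (by simp) (fun x _ => ?_)
    (fun u hu => extend_eq_self_of_agreeOff hs (Finset.mem_filter.mp hu).2)
    (fun x _ => extend_comp hs x v) (fun u hu => ?_)
  · simp only [Finset.mem_filter, Finset.mem_univ, true_and]
    exact fun j hj => (extend_apply' _ _ _ (not_exists.mpr hj)).symm
  · rw [extend_eq_self_of_agreeOff hs (Finset.mem_filter.mp hu).2]

theorem embedAlong_mul [DecidableEq I] [Fintype N] {s : I → K} (hs : Injective s)
    (X Y : Matrix (I → N) (I → N) A) :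
    embedAlong s X * embedAlong s Y = embedAlong s (X * Y) := by
  ext v w
  rw [embedAlong_mul_apply hs]
  simp only [embedAlong, of_apply, extend_comp hs, agreeOff_extend_iff, mul_apply,
    Finset.sum_mul, mul_assoc]

theorem embedAlong_one (s : I → K) :
    embedAlong s (1 : Matrix (I → N) (I → N) A) = 1 := by
  ext v w
  simp only [embedAlong, of_apply, one_apply, ite_zero_mul_ite_zero, mul_one]
  refine if_congr ⟨fun ⟨h₁, h₂⟩ => funext fun j => ?_, fun h => by simp [h]⟩ rfl rfl
  by_cases hj : ∃ i, s i = j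
  · obtain ⟨i, rfl⟩ := hj
    exact congrFun h₁ i
  · exact h₂ j (not_exists.mp hj)

theorem embedAlong_comp [DecidableEq I] {s : I → K} (hs : Injective s) (t : J → I)
    (X : Matrix (J → N) (J → N) A) :
    embedAlong s (embedAlong t X) = embedAlong (s ∘ t) X := by
  ext v w
  simp only [embedAlong, of_apply, mul_assoc, ite_zero_mul_ite_zero, mul_one, comp_assoc]
  congr 1
  refine if_congr ⟨fun ⟨h₁, h₂⟩ j hj => ?_, fun h => ⟨fun i hi => ?_, fun j hj => ?_⟩⟩ rfl rfl
  · by_cases hj' : ∃ i, s i = j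
    · obtain ⟨i, rfl⟩ := hj'
      exact h₁ i fun i' hi' => hj i' (congrArg s hi')
    · exact h₂ j (not_exists.mp hj')
  · exact h (s i) fun i' hi' => hi i' (hs hi')
  · exact h j fun i' => hj (t i')

theorem embedAlong_mul_embedAlong_apply [DecidableEq I] [Fintype N] {s : I → K} {t : J → K}
    (hs : Injective s) (hst : ∀ i i', s i ≠ t i') (X : Matrix (I → N) (I → N) A)
    (Y : Matrix (J → N) (J → N) A) (v w : K → N) :
    (embedAlong s X * embedAlong t Y) v w = X (v ∘ s) (w ∘ s) * (Y (v ∘ t) (w ∘ t) *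
      if ∀ j, (∀ i, s i ≠ j) → (∀ i, t i ≠ j) → v j = w j then 1 else 0) := by
  have hvt (x : I → N) : extend s x v ∘ t = v ∘ t :=
    funext fun i => extend_apply' _ _ _ (not_exists.mpr fun i' => hst i' i)
  rw [embedAlong_mul_apply hs]
  simp only [embedAlong, of_apply, hvt, agreeOff_extend_iff_of_disjoint hs hst, ite_and,
    mul_ite, mul_zero, Finset.sum_ite_eq', Finset.mem_univ, if_true]

theorem commute_embedAlong [DecidableEq I] [DecidableEq J] [Fintype N]
    {s : I → K} {t : J → K} (hs : Injective s) (ht : Injective t)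
    (hst : ∀ i i', s i ≠ t i') (X : Matrix (I → N) (I → N) A) {Y : Matrix (J → N) (J → N) A}
    (hY : ∀ a b c, Commute (Y a b) c) : Commute (embedAlong s X) (embedAlong t Y) := by
  ext v w
  rw [embedAlong_mul_embedAlong_apply hs hst, embedAlong_mul_embedAlong_apply ht
    (fun i i' => (hst i' i).symm), (hY _ _ _).symm.left_comm]
  congr 2
  exact if_congr ⟨fun h j ht' hs' => h j hs' ht', fun h j hs' ht' => h j ht' hs'⟩ rfl rfl

end EmbedAlong

section Window

variable {m : ℕ}

def window (n p : ℕ) (h : p + n ≤ m) : Fin n → Fin m := fun i => ⟨p + i, by omega⟩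

theorem window_injective {n p : ℕ} (h : p + n ≤ m) : Injective (window n p h) :=
  fun i i' e => Fin.ext (by simpa [window] using e)

theorem window_comp_window {n n' p q : ℕ} (h : p + n ≤ m) (h' : q + n' ≤ n) :
    window n p h ∘ window n' q h' = window n' (p + q) (by omega) :=
  funext fun i => Fin.ext (by simp [window, add_assoc])

theorem window_ne_window {n n' p q : ℕ} (h : p + n ≤ m) (h' : q + n' ≤ m) (hpq : p + n ≤ q)
    (i : Fin n) (i' : Fin n') : window n p h i ≠ window n' q h' i' := by
  simp only [window, ne_eq, Fin.mk.injEq]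
  omega

theorem forall_window_ne_iff {n p : ℕ} (h : p + n ≤ m) (j : Fin m) :
    (∀ i, window n p h i ≠ j) ↔ (j : ℕ) < p ∨ p + n ≤ j := by
  constructor
  · intro H
    by_contra hj
    exact H ⟨j - p, by omega⟩ (Fin.ext (by simp only [window]; omega))
  · rintro hj i rfl
    simp only [window] at hj
    omega

end Window

@[simps]
def finThreeArrowEquiv (α : Type*) : (Fin 3 → α) ≃ α × α × α where
  toFun x := (x 0, x 1, x 2)
  invFun y := ![y.1, y.2.1, y.2.2]
  left_inv x := by ext i; fin_cases i <;> rfl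
  right_inv _ := rfl

section Lift

variable {N m : ℕ} {A : Type} [Ring A]

theorem lift2_eq_embedAlong (X : Matrix (Fin N × Fin N) (Fin N × Fin N) A) {p : ℕ}
    (h : p + 2 ≤ m) : lift2 m X p =
      embedAlong (window 2 p h) (X.submatrix (finTwoArrowEquiv _) (finTwoArrowEquiv _)) := by
  ext v w
  simp only [lift2, embedAlong, of_apply, dif_pos (show p + 1 < m by omega)]
  congr 2
  simp [Fin.forall_fin_two, window, Fin.ext_iff, eq_comm]

theorem lift2_of_not_lt (X : Matrix (Fin N × Fin N) (Fin N × Fin N) A) {p : ℕ}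
    (h : ¬p + 1 < m) : lift2 m X p = 1 := by
  ext v w
  simp [lift2, h, one_apply]

theorem liftV_eq_embedAlong (M : Matrix (Fin N) (Fin N) A) {p : ℕ} (h : p + 1 ≤ m) :
    liftV m M p = embedAlong (window 1 p h) (M.submatrix (· 0) (· 0)) := by
  ext v w
  simp only [liftV, embedAlong, of_apply, dif_pos (show p < m by omega)]
  congr 2
  simp [window, Fin.ext_iff, eq_comm]

theorem lift1_submatrix_eq_embedAlong (M : Matrix (Fin N) (Fin N) A) :
    (lift1 M).submatrix (finTwoArrowEquiv _) (finTwoArrowEquiv _) =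
      embedAlong (window 1 0 (by norm_num) : Fin 1 → Fin 2) (M.submatrix (· 0) (· 0)) := by
  ext v w
  simp [lift1, embedAlong, Fin.forall_fin_two, window, Fin.ext_iff]

theorem up12_map_submatrix_eq_embedAlong (φ : ℂ →+* A)
    (X : Matrix (Fin N × Fin N) (Fin N × Fin N) ℂ) :
    ((up12 X).map φ).submatrix (finThreeArrowEquiv _) (finThreeArrowEquiv _) =
      embedAlong (window 2 0 (by norm_num) : Fin 2 → Fin 3)
        ((X.map φ).submatrix (finTwoArrowEquiv _) (finTwoArrowEquiv _)) := by
  ext v w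
  simp only [up12, embedAlong, submatrix_apply, map_apply, of_apply, map_mul, apply_ite φ,
    map_one, map_zero]
  congr 2
  simp [forall_window_ne_iff, Fin.forall_fin_succ]

theorem up23_map_submatrix_eq_embedAlong (φ : ℂ →+* A)
    (X : Matrix (Fin N × Fin N) (Fin N × Fin N) ℂ) :
    ((up23 X).map φ).submatrix (finThreeArrowEquiv _) (finThreeArrowEquiv _) =
      embedAlong (window 2 1 (by norm_num) : Fin 2 → Fin 3)
        ((X.map φ).submatrix (finTwoArrowEquiv _) (finTwoArrowEquiv _)) := by
  ext v w
  simp only [up23, embedAlong, submatrix_apply, map_apply, of_apply, apply_ite φ, map_zero,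
    ite_mul, mul_ite, one_mul, zero_mul, mul_one, mul_zero]
  refine if_congr ?_ rfl rfl
  simp [forall_window_ne_iff]

theorem lift2_mul (X Y : Matrix (Fin N × Fin N) (Fin N × Fin N) A) (p : ℕ) :
    lift2 m X p * lift2 m Y p = lift2 m (X * Y) p := by
  by_cases h : p + 1 < m
  · simp only [lift2_eq_embedAlong _ h, embedAlong_mul (window_injective _),
      submatrix_mul_equiv]
  · simp only [lift2_of_not_lt _ h, mul_one]

theorem lift2_one (p : ℕ) : lift2 m (1 : Matrix (Fin N × Fin N) (Fin N × Fin N) A) p = 1 := by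
  by_cases h : p + 1 < m
  · rw [lift2_eq_embedAlong _ h, submatrix_one_equiv, embedAlong_one]
  · exact lift2_of_not_lt _ h

theorem Commute.lift2 {X Y : Matrix (Fin N × Fin N) (Fin N × Fin N) A}
    (h : Commute X Y) (p : ℕ) : Commute (lift2 m X p) (lift2 m Y p) := by
  rw [Commute, SemiconjBy, lift2_mul, lift2_mul, h.eq]

theorem liftV_zero_eq_lift2_lift1 (M : Matrix (Fin N) (Fin N) A) (h : 1 < m) :
    liftV m M 0 = lift2 m (lift1 M) 0 := by
  rw [lift2_eq_embedAlong _ h, lift1_submatrix_eq_embedAlong,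
    embedAlong_comp (window_injective _), window_comp_window, liftV_eq_embedAlong]

theorem commute_lift2_lift2_of_add_two_le (X : Matrix (Fin N × Fin N) (Fin N × Fin N) A)
    {Y : Matrix (Fin N × Fin N) (Fin N × Fin N) A} (hY : ∀ a b c, Commute (Y a b) c)
    {p q : ℕ} (hpq : p + 2 ≤ q) : Commute (lift2 m X p) (lift2 m Y q) := by
  by_cases h : q + 1 < m
  · rw [lift2_eq_embedAlong _ (by omega : p + 2 ≤ m), lift2_eq_embedAlong _ h]
    exact commute_embedAlong (window_injective _) (window_injective _)
      (window_ne_window _ _ hpq) _ fun _ _ => hY _ _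
  · rw [lift2_of_not_lt _ h]
    exact Commute.one_right _

theorem commute_liftV_lift2_of_add_one_le (M : Matrix (Fin N) (Fin N) A)
    {Y : Matrix (Fin N × Fin N) (Fin N × Fin N) A} (hY : ∀ a b c, Commute (Y a b) c)
    {p q : ℕ} (hpq : p + 1 ≤ q) : Commute (liftV m M p) (lift2 m Y q) := by
  by_cases h : q + 1 < m
  · rw [liftV_eq_embedAlong _ (by omega : p + 1 ≤ m), lift2_eq_embedAlong _ h]
    exact commute_embedAlong (window_injective _) (window_injective _)
      (window_ne_window _ _ hpq) _ fun _ _ => hY _ _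
  · rw [lift2_of_not_lt _ h]
    exact Commute.one_right _

theorem lift2_map_eq_embedAlong_up12 (φ : ℂ →+* A)
    (X : Matrix (Fin N × Fin N) (Fin N × Fin N) ℂ) {p : ℕ} (h : p + 3 ≤ m) :
    lift2 m (X.map φ) p = embedAlong (window 3 p h)
      (((up12 X).map φ).submatrix (finThreeArrowEquiv _) (finThreeArrowEquiv _)) := by
  rw [lift2_eq_embedAlong _ (by omega), up12_map_submatrix_eq_embedAlong,
    embedAlong_comp (window_injective _), window_comp_window]
  rfl

theorem lift2_succ_map_eq_embedAlong_up23 (φ : ℂ →+* A)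
    (X : Matrix (Fin N × Fin N) (Fin N × Fin N) ℂ) {p : ℕ} (h : p + 3 ≤ m) :
    lift2 m (X.map φ) (p + 1) = embedAlong (window 3 p h)
      (((up23 X).map φ).submatrix (finThreeArrowEquiv _) (finThreeArrowEquiv _)) := by
  rw [up23_map_submatrix_eq_embedAlong, embedAlong_comp (window_injective _),
    window_comp_window, lift2_eq_embedAlong]

theorem lift2_map_mul_eq_of_up12_up23 (φ : ℂ →+* A)
    {X Y Z X' Y' Z' : Matrix (Fin N × Fin N) (Fin N × Fin N) ℂ}
    (h : up12 X * up23 Y * up12 Z = up23 X' * up12 Y' * up23 Z') {p : ℕ} (hp : p + 3 ≤ m) :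
    lift2 m (X.map φ) p * lift2 m (Y.map φ) (p + 1) * lift2 m (Z.map φ) p =
      lift2 m (X'.map φ) (p + 1) * lift2 m (Y'.map φ) p * lift2 m (Z'.map φ) (p + 1) := by
  let T (W : Matrix (Fin N × Fin N × Fin N) (Fin N × Fin N × Fin N) ℂ) :=
    embedAlong (window 3 p hp) ((W.map φ).submatrix (finThreeArrowEquiv _) (finThreeArrowEquiv _))
  have hT (W W') : T (W * W') = T W * T W' := by
    simp only [T]
    rw [embedAlong_mul (window_injective _), submatrix_mul_equiv, Matrix.map_mul]
  have hTh := congrArg T h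
  simp only [hT] at hTh
  simpa only [T, ← lift2_map_eq_embedAlong_up12, ← lift2_succ_map_eq_embedAlong_up23] using hTh

theorem commute_copies_lift2_of_add_one_le (F Finv : Matrix (Fin N × Fin N) (Fin N × Fin N) A)
    {Y : Matrix (Fin N × Fin N) (Fin N × Fin N) A} (hY : ∀ a b c, Commute (Y a b) c)
    (M : Matrix (Fin N) (Fin N) A) {n q : ℕ} (hnq : n + 1 ≤ q) :
    Commute (copies m F Finv M n) (lift2 m Y q) := by
  induction n with
  | zero => exact commute_liftV_lift2_of_add_one_le M hY hnq
  | succ n ih =>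
    exact ((commute_lift2_lift2_of_add_two_le F hY hnq).mul_left (ih (by omega))).mul_left
      (commute_lift2_lift2_of_add_two_le Finv hY hnq)

end Lift

open ConjAct in
theorem Commute.conj_of_braid {S : Type*} [Monoid S] {f g : Sˣ} {r r' x : S}
    (hbraid : (f : S) * g * f = g * f * g) (hcomp : (f : S) * g * r = r' * f * g)
    (hxg : Commute x g) (h : Commute r (x * (f * x * ↑f⁻¹))) :
    Commute r' (f * x * ↑f⁻¹ * (g * (f * x * ↑f⁻¹) * ↑g⁻¹)) := by
  have hc (u : Sˣ) (s : S) : toConjAct u • s = u * s * ↑u⁻¹ := by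
    rw [units_smul_def, ofConjAct_toConjAct]
  have hgx : toConjAct g • x = x := by rw [hc, ← hxg.eq, Units.mul_inv_cancel_right]
  have hfgf : f * g * f = g * f * g := Units.ext (by simpa using hbraid)
  have hfg_x : toConjAct (f * g) • x = toConjAct f • x := by rw [map_mul, mul_smul, hgx]
  have hfg_fx : toConjAct (f * g) • toConjAct f • x = toConjAct g • toConjAct f • x := by
    rw [← mul_smul, ← map_mul, hfgf, map_mul, map_mul, mul_smul, mul_smul, hgx]
  have hr' : r' = toConjAct (f * g) • r := by
    rw [hc, Units.eq_mul_inv_iff_mul_eq, Units.val_mul, ← mul_assoc, hcomp]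
  have hconj : f * x * ↑f⁻¹ * (g * (f * x * ↑f⁻¹) * ↑g⁻¹) =
      toConjAct (f * g) • (x * (f * x * ↑f⁻¹)) := by
    rw [← hc f x, ← hc g, smul_mul', hfg_x, hfg_fx]
  rw [hconj, hr', Commute, SemiconjBy, ← smul_mul', h.eq, smul_mul']

theorem commute_lift2_copies_mul_copies {N m : ℕ} {A : Type} [Ring A]
    {R F Finv : Matrix (Fin N × Fin N) (Fin N × Fin N) A}
    (hFFinv : F * Finv = 1) (hFinvF : Finv * F = 1) (hF : ∀ a b c, Commute (F a b) c)
    (hbraid : ∀ p, p + 3 ≤ m →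
      lift2 m F p * lift2 m F (p + 1) * lift2 m F p =
        lift2 m F (p + 1) * lift2 m F p * lift2 m F (p + 1))
    (hcomp : ∀ p, p + 3 ≤ m →
      lift2 m F p * lift2 m F (p + 1) * lift2 m R p =
        lift2 m R (p + 1) * lift2 m F p * lift2 m F (p + 1))
    (M : Matrix (Fin N) (Fin N) A)
    (hQM : R * lift1 M * (F * lift1 M * Finv) = lift1 M * (F * lift1 M * Finv) * R) :
    ∀ p, p + 2 ≤ m →
      Commute (lift2 m R p) (copies m F Finv M p * copies m F Finv M (p + 1)) := by
  let Fu (p : ℕ) : (Matrix (Fin m → Fin N) (Fin m → Fin N) A)ˣ :=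
    ⟨lift2 m F p, lift2 m Finv p, by rw [lift2_mul, hFFinv, lift2_one],
      by rw [lift2_mul, hFinvF, lift2_one]⟩
  intro p hp
  induction p with
  | zero =>
    have hcopies : copies m F Finv M 0 * copies m F Finv M 1 =
        lift2 m (lift1 M * (F * lift1 M * Finv)) 0 := by
      simp only [copies, liftV_zero_eq_lift2_lift1 M hp, lift2_mul]
    rw [hcopies]
    exact Commute.lift2 (by rw [Commute, SemiconjBy, ← mul_assoc, hQM]) 0
  | succ p ih =>
    exact Commute.conj_of_braid (f := Fu p) (g := Fu (p + 1)) (hbraid p hp) (hcomp p hp)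
      (commute_copies_lift2_of_add_one_le F Finv hF M le_rfl) (ih (by omega))

theorem qm_relation_propagates_general (N : ℕ)
    (R F Finv : Matrix (Fin N × Fin N) (Fin N × Fin N) ℂ)
    (hYBF : up12 F * up23 F * up12 F = up23 F * up12 F * up23 F)
    (hFinv : F * Finv = 1 ∧ Finv * F = 1)
    (hcomp : up12 R * up23 F * up12 F = up23 F * up12 F * up23 R
      ∧ up12 F * up23 F * up12 R = up23 R * up12 F * up23 F)
    (A : Type) [Ring A] [Algebra ℂ A] (M : Matrix (Fin N) (Fin N) A)
    (hQM : R.map (algebraMap ℂ A) * lift1 M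
          * (F.map (algebraMap ℂ A) * lift1 M * Finv.map (algebraMap ℂ A))
        = lift1 M * (F.map (algebraMap ℂ A) * lift1 M * Finv.map (algebraMap ℂ A))
          * R.map (algebraMap ℂ A)) :
    ∀ k : ℕ, 1 ≤ k →
      lift2 (k + 1) (R.map (algebraMap ℂ A)) (k - 1)
          * copies (k + 1) (F.map (algebraMap ℂ A)) (Finv.map (algebraMap ℂ A)) M (k - 1)
          * copies (k + 1) (F.map (algebraMap ℂ A)) (Finv.map (algebraMap ℂ A)) M k
        = copies (k + 1) (F.map (algebraMap ℂ A)) (Finv.map (algebraMap ℂ A)) M (k - 1)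
          * copies (k + 1) (F.map (algebraMap ℂ A)) (Finv.map (algebraMap ℂ A)) M k
          * lift2 (k + 1) (R.map (algebraMap ℂ A)) (k - 1) := by
  intro k hk
  obtain ⟨p, rfl⟩ := Nat.exists_eq_add_of_le' hk
  have hmap_one : (1 : Matrix (Fin N × Fin N) (Fin N × Fin N) ℂ).map (algebraMap ℂ A) = 1 :=
    Matrix.map_one _ (map_zero _) (map_one _)
  have key := commute_lift2_copies_mul_copies (m := p + 1 + 1) (R := R.map (algebraMap ℂ A))
    (F := F.map (algebraMap ℂ A)) (Finv := Finv.map (algebraMap ℂ A))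
    (by rw [← Matrix.map_mul, hFinv.1, hmap_one]) (by rw [← Matrix.map_mul, hFinv.2, hmap_one])
    (fun _ _ _ => Algebra.commute_algebraMap_left _ _)
    (fun _ hq => lift2_map_mul_eq_of_up12_up23 _ hYBF hq)
    (fun _ hq => lift2_map_mul_eq_of_up12_up23 _ hcomp.2 hq) M hQM p le_rfl
  rw [Nat.add_sub_cancel, mul_assoc]
  exact key.eq

/-- For a quantum matrix algebra built from a compatible pair `{R,F}`, the
defining relation `R₁ M_{1̄} M_{2̄} = M_{1̄} M_{2̄} R₁` propagates to all
consecutive pairs of copies: `R_k M_{k̄} M_{k+1‾} = M_{k̄} M_{k+1‾} R_k`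
in `Mat_{N^{k+1}}(A)`. -/
theorem qm_relation_propagates (N : ℕ) (hN : 1 ≤ N)
    (R Rinv F Finv : Matrix (Fin N × Fin N) (Fin N × Fin N) ℂ)
    (hYBR : up12 R * up23 R * up12 R = up23 R * up12 R * up23 R)
    (hYBF : up12 F * up23 F * up12 F = up23 F * up12 F * up23 F)
    (hRinv : R * Rinv = 1 ∧ Rinv * R = 1)
    (hFinv : F * Finv = 1 ∧ Finv * F = 1)
    (hcomp : up12 R * up23 F * up12 F = up23 F * up12 F * up23 R
      ∧ up12 F * up23 F * up12 R = up23 R * up12 F * up23 F)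
    (A : Type) [Ring A] [Algebra ℂ A] (M : Matrix (Fin N) (Fin N) A)
    (hQM : R.map (algebraMap ℂ A) * lift1 M
          * (F.map (algebraMap ℂ A) * lift1 M * Finv.map (algebraMap ℂ A))
        = lift1 M * (F.map (algebraMap ℂ A) * lift1 M * Finv.map (algebraMap ℂ A))
          * R.map (algebraMap ℂ A)) :
    ∀ k : ℕ, 1 ≤ k →
      lift2 (k + 1) (R.map (algebraMap ℂ A)) (k - 1)
          * copies (k + 1) (F.map (algebraMap ℂ A)) (Finv.map (algebraMap ℂ A)) M (k - 1)
          * copies (k + 1) (F.map (algebraMap ℂ A)) (Finv.map (algebraMap ℂ A)) M k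
        = copies (k + 1) (F.map (algebraMap ℂ A)) (Finv.map (algebraMap ℂ A)) M (k - 1)
          * copies (k + 1) (F.map (algebraMap ℂ A)) (Finv.map (algebraMap ℂ A)) M k
          * lift2 (k + 1) (R.map (algebraMap ℂ A)) (k - 1) :=
  qm_relation_propagates_general N R F Finv hYBF hFinv hcomp A M hQM
end

section
/- Let R be an R-matrix on V⊗V, V = ℂ^N, let A be an associative unital ℂ-algebra, let η ∈ ℂ∖{0}, and let L, M ∈ Mat_N(A) be invertible matrices over A satisfying: (i) R₁L₁R₁L₁ = L₁R₁L₁R₁; (ii) R₁M₁R₁M₁ = M₁R₁M₁R₁; (iii) R₁L₁R₁M₁ = η·M₁R₁L₁R₁⁻¹. Then the matrix N' := M⁻¹ L M⁻¹ L⁻¹ M (i.e., N' = M⁻¹Q with Q = LM⁻¹L⁻¹M) satisfies: R₁N'₁R₁N'₁ = N'₁R₁N'₁R₁ and R₁⁻¹N'₁R₁M₁ = M₁R₁⁻¹N'₁R₁ in Mat_{N²}(A). -/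
open Matrix BigOperators

/-!
Pass to the group of units of `Mat_{N²}(A)`, in which `c = η • 1` is central, and let
`Q = L M⁻¹ L⁻¹ M`, so that `N' = M⁻¹ Q`. The relations say how conjugation by `L` and by `M` acts
on `r X r`, `r X r⁻¹` and `r⁻¹ X r` for `X = L, M`; e.g. `M` fixes `r M r` and sends
`r M r⁻¹ ↦ r⁻¹ M r` and `r L r⁻¹ ↦ c⁻¹ r L r`. Hence conjugation by `M` maps
`r Q r = (r L r⁻¹)(r M r⁻¹)⁻¹(r L r⁻¹)⁻¹(r M r)` to `(r L r)(r⁻¹ M r)⁻¹(r L r)⁻¹(r M r) = r Q r`,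
and similarly for `L`, so `r Q r` commutes with `L`, `M` and `N'`. Conjugating `[M⁻¹, r M r] = 1`
by `L` shows that `L M⁻¹ L⁻¹` commutes with `r⁻¹ M r = M (r M r⁻¹) M⁻¹`, i.e. that
`N' = M⁻¹ (L M⁻¹ L⁻¹) M` commutes with `r M r⁻¹`: this is the second relation. Finally
`r N' r = (r M r⁻¹)⁻¹ (r Q r)` commutes with `N'`, which is the reflection equation for `N'`.
-/

section ReflectionEquation

variable {G : Type*} [Group G] {a c r x y z w L M : G}

def ReflectionEq (r x : G) : Prop := r * x * r * x = x * r * x * r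

def CrossEq (r c L M : G) : Prop := r * L * r * M = c * (M * r * L * r⁻¹)

theorem reflectionEq_iff_commute : ReflectionEq r x ↔ Commute x (r * x * r) := by
  simp only [ReflectionEq, Commute, SemiconjBy, ← mul_assoc]
  exact eq_comm

theorem ReflectionEq.semiconjBy (h : ReflectionEq r x) :
    SemiconjBy x (r * x * r⁻¹) (r⁻¹ * x * r) :=
  calc x * (r * x * r⁻¹) = r⁻¹ * (r * x * r * x) * r⁻¹ := by group
    _ = r⁻¹ * (x * r * x * r) * r⁻¹ := by rw [h]
    _ = r⁻¹ * x * r * x := by group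

theorem SemiconjBy.conj_of_mem_center (hc : c ∈ Subgroup.center G)
    (hxy : SemiconjBy a x (c * y)) (hzw : SemiconjBy a z w) :
    SemiconjBy a (x * z * x⁻¹) (y * w * y⁻¹) := by
  have hconj : c * y * w * (c * y)⁻¹ = y * w * y⁻¹ := by
    rw [show c * y * w * (c * y)⁻¹ = c * (y * w * y⁻¹) * c⁻¹ by group,
      ← Subgroup.mem_center_iff.mp hc, mul_inv_cancel_right]
  simpa only [hconj] using (hxy.mul_right hzw).mul_right hxy.inv_right

theorem Commute.conj_of_semiconjBy (h : SemiconjBy x z y) (ha : Commute a z) :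
    Commute (x * a * x⁻¹) y := by
  simpa only [h.eq, mul_inv_cancel_right] using (Commute.conj_iff x).2 ha

theorem CrossEq.right_semiconjBy (h : CrossEq r c L M) :
    SemiconjBy M (r * L * r⁻¹) (c⁻¹ * (r * L * r)) :=
  calc M * (r * L * r⁻¹) = c⁻¹ * (c * (M * r * L * r⁻¹)) := by group
    _ = c⁻¹ * (r * L * r * M) := by rw [h]
    _ = c⁻¹ * (r * L * r) * M := by group

theorem CrossEq.left_semiconjBy (hc : c ∈ Subgroup.center G) (h : CrossEq r c L M) :
    SemiconjBy L (r * M * r)⁻¹ (c⁻¹ * (r⁻¹ * M * r)⁻¹) := by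
  have hcomm := Subgroup.mem_center_iff.mp (inv_mem hc)
  have h' : M * r * L * r⁻¹ = c⁻¹ * (r * L * r * M) := by rw [h]; group
  calc L * (r * M * r)⁻¹ = (r⁻¹ * M * r)⁻¹ * (r⁻¹ * (M * r * L * r⁻¹) * r) * (r * M * r)⁻¹ := by
        group
    _ = (r⁻¹ * M * r)⁻¹ * (r⁻¹ * (c⁻¹ * (r * L * r * M)) * r) * (r * M * r)⁻¹ := by rw [h']
    _ = c⁻¹ * ((r⁻¹ * M * r)⁻¹ * (r⁻¹ * (r * L * r * M) * r) * (r * M * r)⁻¹) := by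
        simp only [mul_assoc, ← hcomm]
    _ = c⁻¹ * (r⁻¹ * M * r)⁻¹ * L := by group

theorem CrossEq.commute_right_mul_commutator_mul (hc : c ∈ Subgroup.center G)
    (hM : ReflectionEq r M) (h : CrossEq r c L M) :
    Commute M (r * (L * M⁻¹ * L⁻¹ * M) * r) := by
  have key := (h.right_semiconjBy.conj_of_mem_center (inv_mem hc)
    hM.semiconjBy.inv_right).mul_right (reflectionEq_iff_commute.1 hM)
  refine (congrArg₂ (SemiconjBy _) ?_ ?_).mp key <;> group

theorem CrossEq.commute_left_mul_commutator_mul (hc : c ∈ Subgroup.center G)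
    (hL : ReflectionEq r L) (h : CrossEq r c L M) :
    Commute L (r * (L * M⁻¹ * L⁻¹ * M) * r) := by
  have key := SemiconjBy.mul_right (reflectionEq_iff_commute.1 hL)
    ((h.left_semiconjBy hc).conj_of_mem_center (inv_mem hc) hL.semiconjBy.inv_right)
  refine (congrArg₂ (SemiconjBy _) ?_ ?_).mp key <;> group

theorem CrossEq.commute_inv_mul_commutator (hc : c ∈ Subgroup.center G)
    (hM : ReflectionEq r M) (h : CrossEq r c L M) :
    Commute (M⁻¹ * L * M⁻¹ * L⁻¹ * M) (r * M * r⁻¹) := by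
  have hP : Commute (L * M⁻¹ * L⁻¹) (r⁻¹ * M * r)⁻¹ := by
    have hPc : Commute (L * M⁻¹ * L⁻¹) c := Subgroup.mem_center_iff.mp hc _
    have := hPc.mul_right
      ((reflectionEq_iff_commute.1 hM).inv_inv.conj_of_semiconjBy (h.left_semiconjBy hc))
    rwa [mul_inv_cancel_left] at this
  have := hP.conj_of_semiconjBy hM.semiconjBy.inv_right.inv_symm_left
  simpa only [inv_inv, mul_assoc] using this.inv_right

theorem CrossEq.reflectionEq_inv_mul_commutator (hc : c ∈ Subgroup.center G)
    (hL : ReflectionEq r L) (hM : ReflectionEq r M) (h : CrossEq r c L M) :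
    ReflectionEq r (M⁻¹ * L * M⁻¹ * L⁻¹ * M) := by
  have hLQ := h.commute_left_mul_commutator_mul hc hL
  have hMQ := h.commute_right_mul_commutator_mul hc hM
  have hNQ :=
    (((hMQ.inv_left.mul_left hLQ).mul_left hMQ.inv_left).mul_left hLQ.inv_left).mul_left hMQ
  have hNK := (h.commute_inv_mul_commutator hc hM).inv_right
  rw [reflectionEq_iff_commute,
    show r * (M⁻¹ * L * M⁻¹ * L⁻¹ * M) * r = (r * M * r⁻¹)⁻¹ * (r * (L * M⁻¹ * L⁻¹ * M) * r) by
      group]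
  exact hNK.mul_right hNQ

end ReflectionEquation

section Lift

variable {N : ℕ} {A : Type} [Ring A]

theorem lift1_eq_blockDiagonal (X : Matrix (Fin N) (Fin N) A) :
    lift1 X = blockDiagonal fun _ => X := by
  ext p q
  simp [lift1, blockDiagonal_apply]

def lift1Hom : Matrix (Fin N) (Fin N) A →* Matrix (Fin N × Fin N) (Fin N × Fin N) A where
  toFun := lift1
  map_one' := by simp [lift1_eq_blockDiagonal, ← Pi.one_def]
  map_mul' X Y := by simp [lift1_eq_blockDiagonal, blockDiagonal_mul]

@[simp]
theorem lift1_mul (X Y : Matrix (Fin N) (Fin N) A) : lift1 (X * Y) = lift1 X * lift1 Y :=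
  lift1Hom.map_mul X Y

end Lift

theorem adjoint_subalgebra_Nmat_general (N : ℕ)
    (R Rinv : Matrix (Fin N × Fin N) (Fin N × Fin N) ℂ)
    (hRinv : R * Rinv = 1 ∧ Rinv * R = 1)
    (A : Type) [Ring A] [Algebra ℂ A] (η : ℂ) (hη : η ≠ 0)
    (L M Linv Minv : Matrix (Fin N) (Fin N) A)
    (hL : L * Linv = 1 ∧ Linv * L = 1)
    (hM : M * Minv = 1 ∧ Minv * M = 1)
    (hREL : R.map (algebraMap ℂ A) * lift1 L * R.map (algebraMap ℂ A) * lift1 L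
        = lift1 L * R.map (algebraMap ℂ A) * lift1 L * R.map (algebraMap ℂ A))
    (hREM : R.map (algebraMap ℂ A) * lift1 M * R.map (algebraMap ℂ A) * lift1 M
        = lift1 M * R.map (algebraMap ℂ A) * lift1 M * R.map (algebraMap ℂ A))
    (hOFP : R.map (algebraMap ℂ A) * lift1 L * R.map (algebraMap ℂ A) * lift1 M
        = algebraMap ℂ A η
            • (lift1 M * R.map (algebraMap ℂ A) * lift1 L * Rinv.map (algebraMap ℂ A))) :
    (R.map (algebraMap ℂ A) * lift1 (Minv * L * Minv * Linv * M) * R.map (algebraMap ℂ A)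
          * lift1 (Minv * L * Minv * Linv * M)
        = lift1 (Minv * L * Minv * Linv * M) * R.map (algebraMap ℂ A)
          * lift1 (Minv * L * Minv * Linv * M) * R.map (algebraMap ℂ A))
      ∧ (Rinv.map (algebraMap ℂ A) * lift1 (Minv * L * Minv * Linv * M)
            * R.map (algebraMap ℂ A) * lift1 M
          = lift1 M * Rinv.map (algebraMap ℂ A) * lift1 (Minv * L * Minv * Linv * M)
            * R.map (algebraMap ℂ A)) := by
  let r := Units.map (algebraMap ℂ A).mapMatrix.toMonoidHom ⟨R, Rinv, hRinv.1, hRinv.2⟩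
  let l := Units.map lift1Hom ⟨L, Linv, hL.1, hL.2⟩
  let m := Units.map lift1Hom ⟨M, Minv, hM.1, hM.2⟩
  let c := Units.map (algebraMap ℂ (Matrix (Fin N × Fin N) (Fin N × Fin N) A)).toMonoidHom
    (Units.mk0 η hη)
  have hc : c ∈ Subgroup.center _ := Subgroup.mem_center_iff.2 fun g =>
    Units.ext (by simpa [c] using (Algebra.commutes η g.val).symm)
  have hLr : ReflectionEq r l := Units.ext (by simpa [r, l, lift1Hom] using hREL)
  have hMr : ReflectionEq r m := Units.ext (by simpa [r, m, lift1Hom] using hREM)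
  have hLM : CrossEq r c l m :=
    Units.ext (by simpa [r, l, m, c, lift1Hom, Algebra.smul_def] using hOFP)
  have hNr := hLM.reflectionEq_inv_mul_commutator hc hLr hMr
  have hNm : Commute (r⁻¹ * (m⁻¹ * l * m⁻¹ * l⁻¹ * m) * r) m := by
    simpa [mul_assoc] using (Commute.conj_iff r⁻¹).2 (hLM.commute_inv_mul_commutator hc hMr)
  constructor
  · simpa [r, l, m, lift1Hom, mul_assoc] using congrArg Units.val hNr
  · simpa [r, l, m, lift1Hom, mul_assoc] using congrArg Units.val hNm.eq

/-- In the right-invariant braided differential algebra built from two copies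
of the reflection equation algebra, the matrix `N' = M⁻¹ L M⁻¹ L⁻¹ M = M⁻¹Q`
satisfies the reflection equation and the twisted commutation relation:
`R₁N'₁R₁N'₁ = N'₁R₁N'₁R₁` and `R₁⁻¹N'₁R₁M₁ = M₁R₁⁻¹N'₁R₁`. -/
theorem adjoint_subalgebra_Nmat (N : ℕ) (hN : 1 ≤ N)
    (R Rinv : Matrix (Fin N × Fin N) (Fin N × Fin N) ℂ)
    (hYB : up12 R * up23 R * up12 R = up23 R * up12 R * up23 R)
    (hRinv : R * Rinv = 1 ∧ Rinv * R = 1)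
    (A : Type) [Ring A] [Algebra ℂ A] (η : ℂ) (hη : η ≠ 0)
    (L M Linv Minv : Matrix (Fin N) (Fin N) A)
    (hL : L * Linv = 1 ∧ Linv * L = 1)
    (hM : M * Minv = 1 ∧ Minv * M = 1)
    (hREL : R.map (algebraMap ℂ A) * lift1 L * R.map (algebraMap ℂ A) * lift1 L
        = lift1 L * R.map (algebraMap ℂ A) * lift1 L * R.map (algebraMap ℂ A))
    (hREM : R.map (algebraMap ℂ A) * lift1 M * R.map (algebraMap ℂ A) * lift1 M
        = lift1 M * R.map (algebraMap ℂ A) * lift1 M * R.map (algebraMap ℂ A))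
    (hOFP : R.map (algebraMap ℂ A) * lift1 L * R.map (algebraMap ℂ A) * lift1 M
        = algebraMap ℂ A η
            • (lift1 M * R.map (algebraMap ℂ A) * lift1 L * Rinv.map (algebraMap ℂ A))) :
    (R.map (algebraMap ℂ A) * lift1 (Minv * L * Minv * Linv * M) * R.map (algebraMap ℂ A)
          * lift1 (Minv * L * Minv * Linv * M)
        = lift1 (Minv * L * Minv * Linv * M) * R.map (algebraMap ℂ A)
          * lift1 (Minv * L * Minv * Linv * M) * R.map (algebraMap ℂ A))
      ∧ (Rinv.map (algebraMap ℂ A) * lift1 (Minv * L * Minv * Linv * M)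
            * R.map (algebraMap ℂ A) * lift1 M
          = lift1 M * Rinv.map (algebraMap ℂ A) * lift1 (Minv * L * Minv * Linv * M)
            * R.map (algebraMap ℂ A)) :=
  adjoint_subalgebra_Nmat_general N R Rinv hRinv A η hη L M Linv Minv hL hM hREL hREM hOFP
end
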